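/- arXiv:2509.20747 — 2 statements merged into one kernel-verified Lean document; each statement's English description precedes it below -/
import Mathlib

section
/- Let h > 0, Δt > 0, r ∈ ℝ, and let k_a ≤ k_b be integers; set G := {r + k·h : k ∈ ℤ, k_a ≤ k ≤ k_b}. Let Φ̃⁺, Φ̃⁻ : G → ℝ satisfy c₀ ≤ Φ̃^±(x) ≤ C for all x ∈ G, where 0 < c₀ ≤ C. Suppose w₀ : G → ℝ satisfies |w₀(x + h) − w₀(x)| ≤ K·h whenever x, x + h ∈ G, and suppose w : G → ℝ solves the resolvent equation w(x) − Δt·(H̃_h w)(x) = w₀(x) for all x ∈ G. Then there exists a constant C₃ > 0 depending only on c₀, C and K (and not on h, Δt, r, k_a, k_b) such that |w(x + h) − w(x)| ≤ C₃·h whenever x, x + h ∈ G. -/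
open scoped Classical

noncomputable section

/-- The one-dimensional grid `{r + k·h : k ∈ ℤ, k_a ≤ k ≤ k_b}`. -/
def grid1 (h r : ℝ) (ka kb : ℤ) : Set ℝ :=
  {x : ℝ | ∃ k : ℤ, ka ≤ k ∧ k ≤ kb ∧ x = r + (k : ℝ) * h}

/-- The one-dimensional state-constrained discrete Hamiltonian `H̃_h` on a grid
`G` with spacing `h`. -/
def ham1d (h : ℝ) (G : Set ℝ) (Φp Φm : ℝ → ℝ) (w : ℝ → ℝ) (x : ℝ) : ℝ :=
  (if x + h ∈ G then Φp x * (Real.exp ((w (x + h) - w x) / h) - 1) else 0)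
    + (if x - h ∈ G then Φm x * (Real.exp ((w (x - h) - w x) / h) - 1) else 0)

/-!
If a slope `w (x + h) - w x` exceeds `Λ h`, the equation at `x` forces the excess `w - w₀` to be
at least `Δt·M` there, with `M = c₀ (e^Λ - 1) - C`. As `w₀` has slopes at most `K h`, the excess is
still `≥ Δt·M` at `x + h`; since the slope into `x + h` is nonnegative, the backward term of the
Hamiltonian there is at most `C`, so the equation at `x + h` can only hold if `x + 2h` lies in the
grid and the slope from `x + h` is again at least `K h`. The steep configuration thus travels to
the right forever, which a bounded grid does not allow. The reflection `x ↦ -x`, which swaps the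
two rates, turns this upper bound on slopes into the lower bound.
-/

open Real
open scoped Pointwise

structure IsResolventSolution (h Δt c0 C K : ℝ) (G : Set ℝ) (Φp Φm w0 w : ℝ → ℝ) : Prop where
  rates : ∀ x ∈ G, c0 ≤ Φp x ∧ Φp x ≤ C ∧ c0 ≤ Φm x ∧ Φm x ≤ C
  datum_lipschitz : ∀ x ∈ G, x + h ∈ G → |w0 (x + h) - w0 x| ≤ K * h
  eq : ∀ x ∈ G, w x - Δt * ham1d h G Φp Φm w x = w0 x

lemma mul_exp_sub_one_le_mul_exp {φ C : ℝ} (s : ℝ) (hφ : 0 ≤ φ) (hφC : φ ≤ C) :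
    φ * (exp s - 1) ≤ C * exp s := by
  nlinarith [exp_pos s]

lemma neg_le_mul_exp_sub_one {φ C : ℝ} (s : ℝ) (hφ : 0 ≤ φ) (hφC : φ ≤ C) :
    -C ≤ φ * (exp s - 1) := by
  nlinarith [exp_pos s]

section Hamiltonian

variable {h c0 C z : ℝ} {G : Set ℝ} {Φp Φm w : ℝ → ℝ}

lemma ham1d_le (hh : 0 < h) (hc0 : 0 ≤ c0)
    (hrate : c0 ≤ Φp z ∧ Φp z ≤ C ∧ c0 ≤ Φm z ∧ Φm z ≤ C)
    (hprev : z - h ∈ G → w (z - h) ≤ w z) :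
    ham1d h G Φp Φm w z ≤
      (if z + h ∈ G then C * exp ((w (z + h) - w z) / h) else 0) + C := by
  obtain ⟨hp0, hpC, hm0, hmC⟩ := hrate
  unfold ham1d
  gcongr ?_ + ?_
  · split_ifs
    exacts [mul_exp_sub_one_le_mul_exp _ (hc0.trans hp0) hpC, le_rfl]
  · split_ifs with hmem
    · have hslope : (w (z - h) - w z) / h ≤ 0 :=
        div_nonpos_of_nonpos_of_nonneg (by linarith [hprev hmem]) hh.le
      have hexp : exp ((w (z - h) - w z) / h) ≤ 1 := exp_le_one_iff.mpr hslope
      nlinarith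
    · linarith [hc0.trans hm0]

lemma le_ham1d (hh : 0 < h) (hc0 : 0 ≤ c0)
    (hrate : c0 ≤ Φp z ∧ Φp z ≤ C ∧ c0 ≤ Φm z ∧ Φm z ≤ C)
    (hnext : z + h ∈ G) (hmono : w z ≤ w (z + h)) :
    c0 * (exp ((w (z + h) - w z) / h) - 1) - C ≤ ham1d h G Φp Φm w z := by
  obtain ⟨hp0, -, hm0, hmC⟩ := hrate
  unfold ham1d
  rw [if_pos hnext, sub_eq_add_neg]
  gcongr ?_ + ?_
  · exact mul_le_mul_of_nonneg_right hp0
      (sub_nonneg.mpr (one_le_exp (div_nonneg (sub_nonneg.mpr hmono) hh.le)))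
  · split_ifs
    exacts [neg_le_mul_exp_sub_one _ (hc0.trans hm0) hmC, by linarith [hc0.trans hm0]]

lemma ham1d_neg (h : ℝ) (G : Set ℝ) (Φp Φm w : ℝ → ℝ) (x : ℝ) :
    ham1d h (-G) (fun y => Φm (-y)) (fun y => Φp (-y)) (fun y => w (-y)) (-x) =
      ham1d h G Φp Φm w x := by
  unfold ham1d
  simp only [Set.mem_neg, neg_add, neg_neg, sub_eq_add_neg]
  ring_nf

end Hamiltonian

lemma not_bddAbove_of_add_mem {S : Set ℝ} {h x : ℝ} (hh : 0 < h) (hx : x ∈ S)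
    (hS : ∀ z ∈ S, z + h ∈ S) : ¬ BddAbove S := by
  have hmem : ∀ n : ℕ, x + n * h ∈ S := by
    intro n
    induction n with
    | zero => simpa using hx
    | succ n ih => simpa [add_one_mul, add_assoc] using hS _ ih
  rintro ⟨b, hb⟩
  obtain ⟨n, hn⟩ := exists_nat_gt ((b - x) / h)
  rw [div_lt_iff₀ hh] at hn
  linarith [hb (hmem n)]

lemma grid1_bddAbove {h : ℝ} (hh : 0 ≤ h) (r : ℝ) (ka kb : ℤ) : BddAbove (grid1 h r ka kb) := by
  refine ⟨r + kb * h, ?_⟩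
  rintro _ ⟨k, -, hk, rfl⟩
  gcongr

lemma grid1_bddBelow {h : ℝ} (hh : 0 ≤ h) (r : ℝ) (ka kb : ℤ) : BddBelow (grid1 h r ka kb) := by
  refine ⟨r + ka * h, ?_⟩
  rintro _ ⟨k, hk, -, rfl⟩
  gcongr

namespace IsResolventSolution

variable {h Δt c0 C K : ℝ} {G : Set ℝ} {Φp Φm w0 w : ℝ → ℝ}

lemma neg (hS : IsResolventSolution h Δt c0 C K G Φp Φm w0 w) :
    IsResolventSolution h Δt c0 C K (-G) (fun y => Φm (-y)) (fun y => Φp (-y))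
      (fun y => w0 (-y)) (fun y => w (-y)) where
  rates x hx := by
    obtain ⟨h1, h2, h3, h4⟩ := hS.rates (-x) hx
    exact ⟨h3, h4, h1, h2⟩
  datum_lipschitz x hx hxh := by
    have hy : -x - h ∈ G := by simpa only [neg_add'] using Set.mem_neg.mp hxh
    have hlip := hS.datum_lipschitz (-x - h) hy (by simpa using hx)
    rwa [sub_add_cancel, abs_sub_comm, ← neg_add'] at hlip
  eq x hx := by
    have hham := ham1d_neg h G Φp Φm w (-x)
    rw [neg_neg] at hham
    rw [hham]
    exact hS.eq (-x) hx

lemma slope_ge_of_excess_ge (hS : IsResolventSolution h Δt c0 C K G Φp Φm w0 w)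
    (hh : 0 < h) (hΔt : 0 < Δt) (hc0 : 0 ≤ c0) (hC : 0 < C) {M z : ℝ}
    (hM : C + C * exp K ≤ M) (hz : z ∈ G) (hexcess : Δt * M ≤ w z - w0 z)
    (hprev : z - h ∈ G → w (z - h) ≤ w z) :
    z + h ∈ G ∧ K * h ≤ w (z + h) - w z := by
  have hub := ham1d_le hh hc0 (hS.rates z hz) hprev
  have hbound : M ≤ (if z + h ∈ G then C * exp ((w (z + h) - w z) / h) else 0) + C :=
    le_of_mul_le_mul_left (by linarith [hS.eq z hz, mul_le_mul_of_nonneg_left hub hΔt.le]) hΔt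
  by_cases hnext : z + h ∈ G
  · rw [if_pos hnext] at hbound
    have hexp : exp K ≤ exp ((w (z + h) - w z) / h) :=
      le_of_mul_le_mul_left (by linarith) hC
    rw [exp_le_exp, le_div_iff₀ hh] at hexp
    exact ⟨hnext, hexp⟩
  · rw [if_neg hnext] at hbound
    nlinarith [exp_pos K]

theorem slope_le (hS : IsResolventSolution h Δt c0 C K G Φp Φm w0 w) (hG : BddAbove G)
    (hh : 0 < h) (hΔt : 0 < Δt) (hc0 : 0 ≤ c0) (hC : 0 < C) (hK : 0 ≤ K) {Λ : ℝ}
    (hKΛ : K ≤ Λ) (hΛ : 2 * C + C * exp K ≤ c0 * (exp Λ - 1)) {x : ℝ}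
    (hx : x ∈ G) (hxh : x + h ∈ G) :
    w (x + h) - w x ≤ Λ * h := by
  by_contra! hsteep
  set M := c0 * (exp Λ - 1) - C
  have hKh : K * h ≤ Λ * h := mul_le_mul_of_nonneg_right hKΛ hh.le
  let S := {z | z ∈ G ∧ z + h ∈ G ∧ Δt * M ≤ w z - w0 z ∧ K * h ≤ w (z + h) - w z}
  refine not_bddAbove_of_add_mem (S := S) (x := x) hh ?_ ?_ (hG.mono fun z hz => hz.1)
  · have hlow := le_ham1d hh hc0 (hS.rates x hx) hxh (by nlinarith)
    have hΛslope : exp Λ ≤ exp ((w (x + h) - w x) / h) :=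
      exp_le_exp.mpr ((le_div_iff₀ hh).mpr hsteep.le)
    have hM : M ≤ ham1d h G Φp Φm w x := by nlinarith
    exact ⟨hx, hxh, by linarith [hS.eq x hx, mul_le_mul_of_nonneg_left hM hΔt.le], by linarith⟩
  · rintro z ⟨hz, hzh, hexcess, hslope⟩
    have hexcess' : Δt * M ≤ w (z + h) - w0 (z + h) := by
      linarith [(abs_le.mp (hS.datum_lipschitz z hz hzh)).2]
    have hprev : z + h - h ∈ G → w (z + h - h) ≤ w (z + h) := fun _ => by
      rw [add_sub_cancel_right]
      linarith [mul_nonneg hK hh.le]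
    obtain ⟨hzhh, hslope'⟩ :=
      hS.slope_ge_of_excess_ge hh hΔt hc0 hC (by linarith) hzh hexcess' hprev
    exact ⟨hzh, hzhh, hexcess', hslope'⟩

theorem abs_slope_le (hS : IsResolventSolution h Δt c0 C K G Φp Φm w0 w)
    (hGa : BddAbove G) (hGb : BddBelow G)
    (hh : 0 < h) (hΔt : 0 < Δt) (hc0 : 0 ≤ c0) (hC : 0 < C) (hK : 0 ≤ K) {Λ : ℝ}
    (hKΛ : K ≤ Λ) (hΛ : 2 * C + C * exp K ≤ c0 * (exp Λ - 1)) {x : ℝ}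
    (hx : x ∈ G) (hxh : x + h ∈ G) :
    |w (x + h) - w x| ≤ Λ * h := by
  have hdown := hS.neg.slope_le (bddAbove_neg.mpr hGb) hh hΔt hc0 hC hK hKΛ hΛ
    (x := -(x + h)) (by simpa using hxh) (by simpa using hx)
  rw [show -(-(x + h) + h) = x by ring, neg_neg] at hdown
  exact abs_le.mpr ⟨by linarith, hS.slope_le hGa hh hΔt hc0 hC hK hKΛ hΛ hx hxh⟩

end IsResolventSolution

/-- **Uniform discrete Lipschitz bound for the resolvent problem**: if the rates
are bounded between `c₀` and `C` and the datum `w₀` has discrete Lipschitz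
constant `K`, then any solution `w` of `w − Δt·H̃_h w = w₀` on the grid has
discrete Lipschitz constant `C₃` depending only on `c₀`, `C`, `K` (and not on
`h`, `Δt`, `r`, `k_a`, `k_b`). -/
theorem resolvent_discrete_lipschitz_bound
    (c0 C K : ℝ) (hc0 : 0 < c0) (hcC : c0 ≤ C) :
    ∃ C3 > 0, ∀ (h Δt r : ℝ) (ka kb : ℤ) (Φp Φm w0 w : ℝ → ℝ),
      0 < h → 0 < Δt → ka ≤ kb →
      (∀ x ∈ grid1 h r ka kb, c0 ≤ Φp x ∧ Φp x ≤ C ∧ c0 ≤ Φm x ∧ Φm x ≤ C) →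
      (∀ x : ℝ, x ∈ grid1 h r ka kb → x + h ∈ grid1 h r ka kb →
        |w0 (x + h) - w0 x| ≤ K * h) →
      (∀ x ∈ grid1 h r ka kb,
        w x - Δt * ham1d h (grid1 h r ka kb) Φp Φm w x = w0 x) →
      ∀ x : ℝ, x ∈ grid1 h r ka kb → x + h ∈ grid1 h r ka kb →
        |w (x + h) - w x| ≤ C3 * h := by
  have hC : 0 < C := hc0.trans_le hcC
  set τ := max K 0
  set Λ := τ + (2 * C + C * exp τ) / c0
  have hquot : 0 < (2 * C + C * exp τ) / c0 := by positivity
  have hτΛ : τ ≤ Λ := by linarith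
  have hΛ : 2 * C + C * exp τ ≤ c0 * (exp Λ - 1) :=
    calc 2 * C + C * exp τ = c0 * ((2 * C + C * exp τ) / c0) := by field_simp
      _ ≤ c0 * Λ := by gcongr; linarith [le_max_right K 0]
      _ ≤ c0 * (exp Λ - 1) := by gcongr; linarith [add_one_le_exp Λ]
  refine ⟨Λ, by linarith [le_max_right K 0], ?_⟩
  intro h Δt r ka kb Φp Φm w0 w hh hΔt _ hΦ hw0 heq x hx hxh
  have hS : IsResolventSolution h Δt c0 C τ (grid1 h r ka kb) Φp Φm w0 w :=
    ⟨hΦ, fun y hy hyh => (hw0 y hy hyh).trans (by gcongr; exact le_max_left K 0), heq⟩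
  exact hS.abs_slope_le (grid1_bddAbove hh.le r ka kb) (grid1_bddBelow hh.le r ka kb)
    hh hΔt hc0.le hC (le_max_right K 0) hτΛ hΛ hx hxh
end
end

section
/- Let D := {(x₁, x₂) ∈ ℝ² : (x₁ − 7)² + (x₂ − 3)² ≤ 2}. Then: (i) for every (x₁, x₂) ∈ D one has x₁ − x₂ ≥ 2, with equality if and only if (x₁, x₂) = (6, 4); equivalently, the test function φ(x₁, x₂) := (21/20)·x₁ + (19/20)·x₂ − 1/10 satisfies φ(x₁, x₂) ≥ x₁ + x₂ on D with equality exactly at (6, 4); and (ii) 6·(exp(−1/10) − 1) + 4·(exp(1/10) − 1) < 0. Consequently, with ν = (−1, 1) and ∇φ = (21/20, 19/20), the subsolution inequality fails at the boundary point (6, 4): 0 > 6·(exp(ν·∇φ) − 1) + 4·(exp(−ν·∇φ) − 1). -/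
noncomputable section

/-- **Explicit counterexample to the state-constraint boundary condition** on the
closed disk `D` of radius `√2` centered at `(7,3)`:
(i) `x₁ − x₂ ≥ 2` on `D`, with equality exactly at `(6,4)`; equivalently the test
function `φ(x₁,x₂) = (21/20)x₁ + (19/20)x₂ − 1/10` satisfies `φ ≥ x₁ + x₂` on `D`
with equality exactly at `(6,4)`;
(ii) `6(e^{−1/10} − 1) + 4(e^{1/10} − 1) < 0`, i.e. with `ν = (−1,1)` and
`∇φ = (21/20, 19/20)` (so `ν·∇φ = −1/10`) the subsolution inequality fails at the
boundary point `(6,4)`. -/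
theorem state_constraint_counterexample :
    (∀ p : ℝ × ℝ, (p.1 - 7) ^ 2 + (p.2 - 3) ^ 2 ≤ 2 → 2 ≤ p.1 - p.2) ∧
    (∀ p : ℝ × ℝ, (p.1 - 7) ^ 2 + (p.2 - 3) ^ 2 ≤ 2 →
      (p.1 - p.2 = 2 ↔ p = ((6 : ℝ), (4 : ℝ)))) ∧
    (∀ p : ℝ × ℝ, (p.1 - 7) ^ 2 + (p.2 - 3) ^ 2 ≤ 2 →
      p.1 + p.2 ≤ 21 / 20 * p.1 + 19 / 20 * p.2 - 1 / 10) ∧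
    (∀ p : ℝ × ℝ, (p.1 - 7) ^ 2 + (p.2 - 3) ^ 2 ≤ 2 →
      (21 / 20 * p.1 + 19 / 20 * p.2 - 1 / 10 = p.1 + p.2 ↔ p = ((6 : ℝ), (4 : ℝ)))) ∧
    (6 * (Real.exp (-(1 / 10)) - 1) + 4 * (Real.exp (1 / 10) - 1) < 0) ∧
    (0 > 6 * (Real.exp ((-1) * (21 / 20) + 1 * (19 / 20)) - 1)
        + 4 * (Real.exp (-((-1) * (21 / 20) + 1 * (19 / 20))) - 1)) := by
  have hE : (11:ℝ)/10 < Real.exp (1/10) := by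
    have := Real.add_one_lt_exp (x := (1/10 : ℝ)) (by norm_num)
    linarith
  have hE' : Real.exp (1/10) < 10/9 := by
    have h := Real.add_one_lt_exp (x := (-(1/10) : ℝ)) (by norm_num)
    have hpos := Real.exp_pos (1/10 : ℝ)
    rw [Real.exp_neg] at h
    have hinv : Real.exp (1/10) * (Real.exp (1/10))⁻¹ = 1 := mul_inv_cancel₀ (ne_of_gt hpos)
    nlinarith [inv_pos.mpr hpos]
  have hexp : 6 * (Real.exp (-(1 / 10)) - 1) + 4 * (Real.exp (1 / 10) - 1) < 0 := by
    rw [Real.exp_neg]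
    have hpos := Real.exp_pos (1/10 : ℝ)
    have hinv : Real.exp (1/10) * (Real.exp (1/10))⁻¹ = 1 := mul_inv_cancel₀ (ne_of_gt hpos)
    nlinarith [inv_pos.mpr hpos]
  refine ⟨?_, ?_, ?_, ?_, hexp, ?_⟩
  · intro p hp; nlinarith [sq_nonneg (p.1 - 6), sq_nonneg (p.2 - 4), sq_nonneg (p.1 - 6 + (p.2 - 4))]
  · intro p hp
    constructor
    · intro h
      have h1 : p.1 = 6 := by nlinarith [sq_nonneg (p.1 - 6 + (p.2 - 4)), sq_nonneg (p.1 - 6 - (p.2 - 4))]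
      have h2 : p.2 = 4 := by linarith
      exact Prod.ext h1 h2
    · rintro rfl; norm_num
  · intro p hp; nlinarith [sq_nonneg (p.1 - 6), sq_nonneg (p.2 - 4), sq_nonneg (p.1 - 6 + (p.2 - 4))]
  · intro p hp
    constructor
    · intro h
      have h1 : p.1 = 6 := by nlinarith [sq_nonneg (p.1 - 6 + (p.2 - 4)), sq_nonneg (p.1 - 6 - (p.2 - 4))]
      have h2 : p.2 = 4 := by nlinarith [sq_nonneg (p.1 - 6 + (p.2 - 4)), sq_nonneg (p.1 - 6 - (p.2 - 4))]
      exact Prod.ext h1 h2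
    · rintro rfl; norm_num
  · have : ((-1) * (21 / 20) + 1 * (19 / 20) : ℝ) = -(1/10) := by norm_num
    rw [this, neg_neg]
    linarith
end
end
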